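/- arXiv:1611.04072 — 3 statements merged into one kernel-verified Lean document; each statement's English description precedes it below -/
import Mathlib

section
/- Let V be a real finite-dimensional vector space endowed with a non-degenerate indefinite quadratic form 𝕁 (as below), and let F : V × V → ℝ be a symmetric bilinear form such that F(v,v) ≥ 0 for every v ∈ C₀. Then r₊ := inf{ F(v,v)/𝕁(v) : v ∈ V, 𝕁(v) > 0 } ≥ sup{ F(u,u)/𝕁(u) : u ∈ V, 𝕁(u) < 0 } =: r₋, and for every r ∈ [r₋, r₊] one has F(v,v) ≥ r·𝕁(v) for every vector v ∈ V. -/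
/-!
On the plane spanned by `u` with `𝕁 u < 0` and `v` with `𝕁 v > 0`, the quadratic
`x ↦ 𝕁 (v + x • u)` is positive at `0` with negative leading coefficient, so it has roots
`s < 0 < t` with `𝕁 u * (s * t) = 𝕁 v`. The hypothesis gives `F ≥ 0` at `v + s • u` and
`v + t • u`, and the combination `t • (at s) - s • (at t)` eliminates the mixed term `F(v,u)`,
leaving `F(v,v) ≥ s t F(u,u)`, i.e. `F(u,u)/𝕁(u) ≤ F(v,v)/𝕁(v)`. So `r₋ ≤ r₊`, and any `r`
between them satisfies `F(w,w) ≥ r 𝕁(w)` on both cones, while on `C₀` this is the hypothesis.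
-/

open scoped RealInnerProductSpace

theorem exists_quadratic_roots_neg_pos {a b c : ℝ} (ha : a < 0) (hc : 0 < c) :
    ∃ s t : ℝ, s < 0 ∧ 0 < t ∧ a * (s * s) + b * s + c = 0 ∧ a * (t * t) + b * t + c = 0 ∧
      a * (s * t) = c := by
  set d := √(discrim a b c)
  have hd : discrim a b c = d * d := (Real.mul_self_sqrt (by unfold discrim; nlinarith)).symm
  have hbd : |b| < d := by
    rw [← Real.sqrt_sq_eq_abs]
    exact Real.sqrt_lt_sqrt (sq_nonneg b) (by unfold discrim; nlinarith)
  have h2a : 2 * a < 0 := by linarith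
  have hroots := quadratic_eq_zero_iff ha.ne hd
  set s := (-b + d) / (2 * a)
  set t := (-b - d) / (2 * a)
  have hs : s < 0 := div_neg_of_pos_of_neg (by linarith [le_abs_self b]) h2a
  have ht : 0 < t := div_pos_of_neg_of_neg (by linarith [neg_abs_le b]) h2a
  have hrs : a * (s * s) + b * s + c = 0 := (hroots s).2 (Or.inl rfl)
  have hrt : a * (t * t) + b * t + c = 0 := (hroots t).2 (Or.inr rfl)
  have hsum : a * (s + t) + b = 0 :=
    mul_left_cancel₀ (sub_ne_zero.2 (hs.trans ht).ne)
      (by linear_combination hrs - hrt : (s - t) * (a * (s + t) + b) = (s - t) * 0)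
  exact ⟨s, t, hs, ht, hrs, hrt, by linear_combination -hrs + s * hsum⟩

theorem le_of_nonneg_at_roots {p q m s t : ℝ} (hs : s < 0) (ht : 0 < t)
    (h_s : 0 ≤ m * (s * s) + q * s + p) (h_t : 0 ≤ m * (t * t) + q * t + p) :
    m * (s * t) ≤ p := by
  have hcomb : t * (m * (s * s) + q * s + p) - s * (m * (t * t) + q * t + p)
      = (t - s) * (p - m * (s * t)) := by ring
  have : 0 ≤ (t - s) * (p - m * (s * t)) := by
    rw [← hcomb]; linarith [mul_nonneg ht.le h_s, mul_nonneg (neg_nonneg.2 hs.le) h_t]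
  linarith [(mul_nonneg_iff_of_pos_left (by linarith : 0 < t - s)).1 this]

namespace QuadraticMap

variable {V : Type*} [AddCommGroup V] [Module ℝ V]

theorem map_add_smul (Q : QuadraticMap ℝ V ℝ) (v u : V) (x : ℝ) :
    Q (v + x • u) = Q u * (x * x) + polar Q v u * x + Q v := by
  have h := polar_smul_right Q x v u
  simp only [polar, QuadraticMap.map_smul, smul_eq_mul] at h ⊢
  linarith

variable (Q P : QuadraticMap ℝ V ℝ) (hP : ∀ w, Q w = 0 → 0 ≤ P w)
include hP

theorem div_le_div_of_nonneg_on_isotropic {u v : V} (hu : Q u < 0) (hv : 0 < Q v) :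
    P u / Q u ≤ P v / Q v := by
  obtain ⟨s, t, hs, ht, hQs, hQt, hst⟩ :=
    exists_quadratic_roots_neg_pos (b := polar Q v u) hu hv
  have hPs := hP (v + s • u) (by rw [map_add_smul, hQs])
  have hPt := hP (v + t • u) (by rw [map_add_smul, hQt])
  rw [map_add_smul] at hPs hPt
  have key := le_of_nonneg_at_roots hs ht hPs hPt
  rwa [le_div_iff₀ hv, ← hst, ← mul_assoc, div_mul_cancel₀ _ hu.ne]

theorem sSup_ratio_le_sInf_ratio (hneg : ∃ u, Q u < 0) (hpos : ∃ v, 0 < Q v) :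
    sSup {r : ℝ | ∃ u, Q u < 0 ∧ r = P u / Q u} ≤ sInf {r : ℝ | ∃ v, 0 < Q v ∧ r = P v / Q v} := by
  obtain ⟨u₀, hu₀⟩ := hneg
  obtain ⟨v₀, hv₀⟩ := hpos
  refine csSup_le ⟨_, u₀, hu₀, rfl⟩ fun _ ⟨u, hu, hr⟩ ↦ le_csInf ⟨_, v₀, hv₀, rfl⟩ ?_
  rintro _ ⟨v, hv, rfl⟩
  exact hr ▸ div_le_div_of_nonneg_on_isotropic Q P hP hu hv

theorem mul_le_of_sSup_ratio_le_of_le_sInf_ratio (hneg : ∃ u, Q u < 0) (hpos : ∃ v, 0 < Q v)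
    {r : ℝ} (hlow : sSup {r : ℝ | ∃ u, Q u < 0 ∧ r = P u / Q u} ≤ r)
    (hupp : r ≤ sInf {r : ℝ | ∃ v, 0 < Q v ∧ r = P v / Q v}) (w : V) :
    r * Q w ≤ P w := by
  obtain ⟨u₀, hu₀⟩ := hneg
  obtain ⟨v₀, hv₀⟩ := hpos
  rcases lt_trichotomy (Q w) 0 with hw | hw | hw
  · have hbdd : BddAbove {r : ℝ | ∃ u, Q u < 0 ∧ r = P u / Q u} :=
      ⟨_, fun _ ⟨u, hu, hr⟩ ↦ hr ▸ div_le_div_of_nonneg_on_isotropic Q P hP hu hv₀⟩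
    exact (div_le_iff_of_neg hw).1 ((le_csSup hbdd ⟨w, hw, rfl⟩).trans hlow)
  · rw [hw, mul_zero]
    exact hP w hw
  · have hbdd : BddBelow {r : ℝ | ∃ v, 0 < Q v ∧ r = P v / Q v} :=
      ⟨_, fun _ ⟨v, hv, hr⟩ ↦ hr ▸ div_le_div_of_nonneg_on_isotropic Q P hP hu₀ hv⟩
    exact (le_div_iff₀ hw).1 (hupp.trans (csInf_le hbdd ⟨w, hw, rfl⟩))

end QuadraticMap

theorem stmt_0_general {n : ℕ}
    (J : EuclideanSpace ℝ (Fin n) →ₗ[ℝ] EuclideanSpace ℝ (Fin n))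
    (hindefpos : ∃ v : EuclideanSpace ℝ (Fin n), 0 < ⟪J v, v⟫)
    (hindefneg : ∃ w : EuclideanSpace ℝ (Fin n), ⟪J w, w⟫ < 0)
    (F : EuclideanSpace ℝ (Fin n) →ₗ[ℝ] EuclideanSpace ℝ (Fin n) →ₗ[ℝ] ℝ)
    (hF0 : ∀ v : EuclideanSpace ℝ (Fin n), ⟪J v, v⟫ = 0 → 0 ≤ F v v) :
    sSup {r : ℝ | ∃ u : EuclideanSpace ℝ (Fin n), ⟪J u, u⟫ < 0 ∧ r = F u u / ⟪J u, u⟫}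
      ≤ sInf {r : ℝ | ∃ v : EuclideanSpace ℝ (Fin n), 0 < ⟪J v, v⟫ ∧ r = F v v / ⟪J v, v⟫} ∧
    ∀ r : ℝ,
      sSup {r : ℝ | ∃ u : EuclideanSpace ℝ (Fin n), ⟪J u, u⟫ < 0 ∧ r = F u u / ⟪J u, u⟫} ≤ r →
      r ≤ sInf {r : ℝ | ∃ v : EuclideanSpace ℝ (Fin n), 0 < ⟪J v, v⟫ ∧ r = F v v / ⟪J v, v⟫} →
      ∀ v : EuclideanSpace ℝ (Fin n), r * ⟪J v, v⟫ ≤ F v v := by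
  let Q := LinearMap.BilinMap.toQuadraticMap (innerₗ _ ∘ₗ J)
  let P := LinearMap.BilinMap.toQuadraticMap F
  exact ⟨QuadraticMap.sSup_ratio_le_sInf_ratio Q P hF0 hindefneg hindefpos,
    fun _ hlow hupp ↦
      QuadraticMap.mul_le_of_sSup_ratio_le_of_le_sInf_ratio Q P hF0 hindefneg hindefpos hlow hupp⟩

/-- **Lemma (Kühne-type).** Let `V = ℝⁿ` (`n ≥ 2`) carry a non-degenerate indefinite
quadratic form `𝕁 v := ⟪J v, v⟫` given by an invertible self-adjoint operator `J`.
If a symmetric bilinear form `F` is non-negative on the zero set `C₀ = {v | 𝕁 v = 0}`,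
then `r₋ := sup { F(u,u)/𝕁(u) : 𝕁(u) < 0 } ≤ inf { F(v,v)/𝕁(v) : 𝕁(v) > 0 } =: r₊`
and for every `r ∈ [r₋, r₊]` one has `F(v,v) ≥ r·𝕁(v)` for every vector `v`. -/
theorem stmt_0 {n : ℕ} (hn : 2 ≤ n)
    (J : EuclideanSpace ℝ (Fin n) →ₗ[ℝ] EuclideanSpace ℝ (Fin n))
    (hJinv : Function.Bijective J)
    (hJsa : ∀ v w : EuclideanSpace ℝ (Fin n), ⟪J v, w⟫ = ⟪v, J w⟫)
    (hindefpos : ∃ v : EuclideanSpace ℝ (Fin n), 0 < ⟪J v, v⟫)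
    (hindefneg : ∃ w : EuclideanSpace ℝ (Fin n), ⟪J w, w⟫ < 0)
    (F : EuclideanSpace ℝ (Fin n) →ₗ[ℝ] EuclideanSpace ℝ (Fin n) →ₗ[ℝ] ℝ)
    (hFsymm : ∀ v w, F v w = F w v)
    (hF0 : ∀ v : EuclideanSpace ℝ (Fin n), ⟪J v, v⟫ = 0 → 0 ≤ F v v) :
    sSup {r : ℝ | ∃ u : EuclideanSpace ℝ (Fin n), ⟪J u, u⟫ < 0 ∧ r = F u u / ⟪J u, u⟫}
      ≤ sInf {r : ℝ | ∃ v : EuclideanSpace ℝ (Fin n), 0 < ⟪J v, v⟫ ∧ r = F v v / ⟪J v, v⟫} ∧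
    ∀ r : ℝ,
      sSup {r : ℝ | ∃ u : EuclideanSpace ℝ (Fin n), ⟪J u, u⟫ < 0 ∧ r = F u u / ⟪J u, u⟫} ≤ r →
      r ≤ sInf {r : ℝ | ∃ v : EuclideanSpace ℝ (Fin n), 0 < ⟪J v, v⟫ ∧ r = F v v / ⟪J v, v⟫} →
      ∀ v : EuclideanSpace ℝ (Fin n), r * ⟪J v, v⟫ ≤ F v v :=
  stmt_0_general J hindefpos hindefneg F hF0
end

section
/- Let V be a real finite-dimensional vector space endowed with a non-degenerate indefinite quadratic form 𝕁 (as below), and let F : V × V → ℝ be a symmetric bilinear form such that F(v,v) > 0 for every v ∈ C₀ \ {0}. Then r₋ := sup{ F(u,u)/𝕁(u) : 𝕁(u) < 0 } < inf{ F(v,v)/𝕁(v) : 𝕁(v) > 0 } =: r₊, and for every r ∈ (r₋, r₊) one has F(v,v) > r·𝕁(v) for every nonzero vector v ∈ V. -/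
open scoped RealInnerProductSpace

/-!
If `Q u < 0 < Q w`, the plane spanned by `u` and `w` contains two independent `Q`-null vectors,
one on each side of the line through `w`. `P` is positive at both, and weighting the two
inequalities so that the cross term `polar P u w` cancels shows that `P` cannot be nonpositive at
both `u` and `w`. Applied to `P - r • Q` with `r = P u / Q u`, this gives `P u / Q u < P w / Q w`.
The gap `r₋ < r₊` follows because both extrema are attained: by homogeneity it suffices to look at
the unit sphere, where `{Q ≤ 0, P ≤ a * Q}` is compact and misses the null cone since `P > 0`
there.
-/

namespace QuadraticMap

section Algebraic

variable {E : Type*} [AddCommGroup E] [Module ℝ E] {P Q : QuadraticForm ℝ E}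

theorem map_smul_add_smul (Q : QuadraticForm ℝ E) (x y : E) (a b : ℝ) :
    Q (a • x + b • y) = a ^ 2 * Q x + a * b * polar Q x y + b ^ 2 * Q y := by
  rw [QuadraticMap.map_add (⇑Q), Q.map_smul, Q.map_smul, polar_smul_left, polar_smul_right]
  simp only [smul_eq_mul]; ring

theorem div_map_smul (P Q : QuadraticForm ℝ E) {c : ℝ} (hc : c ≠ 0) (x : E) :
    P (c • x) / Q (c • x) = P x / Q x := by
  rw [P.map_smul, Q.map_smul, smul_eq_mul, smul_eq_mul]
  exact mul_div_mul_left _ _ (mul_ne_zero hc hc)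

theorem pos_or_pos_of_neg_of_pos (hPQ : ∀ x ≠ 0, Q x = 0 → 0 < P x) {u w : E}
    (hu : Q u < 0) (hw : 0 < Q w) : 0 < P u ∨ 0 < P w := by
  by_contra! hP
  obtain ⟨hPu, hPw⟩ := hP
  set b := polar Q u w
  set D := √(b ^ 2 - 4 * Q u * Q w)
  have hD : D ^ 2 = b ^ 2 - 4 * Q u * Q w := Real.sq_sqrt (by nlinarith)
  obtain ⟨hDb₁, hDb₂⟩ : -D < b ∧ b < D := abs_lt.mp <| by
    rw [← Real.sqrt_sq_eq_abs]
    exact Real.sqrt_lt_sqrt (sq_nonneg _) (by nlinarith)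
  have hnull : ∀ x, x ^ 2 + 2 * b * x + 4 * Q u * Q w = 0 →
      0 < P (x • u + (2 * Q u) • w) := by
    intro x hx
    refine hPQ _ (fun h0 ↦ ?_) (by rw [map_smul_add_smul]; linear_combination Q u * hx)
    have := congrArg Q (eq_neg_of_add_eq_zero_right h0)
    rw [Q.map_neg, Q.map_smul, Q.map_smul, smul_eq_mul, smul_eq_mul] at this
    nlinarith [mul_pos (mul_pos_of_neg_of_neg hu hu) hw,
      mul_nonpos_of_nonneg_of_nonpos (sq_nonneg x) hu.le]
  have hplus := hnull (-b + D) (by linear_combination hD)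
  have hminus := hnull (-b - D) (by linear_combination hD)
  rw [map_smul_add_smul] at hplus hminus
  -- weighting the two null vectors by `D + b` and `D - b` eliminates `polar P u w`
  have hcomb : 0 < 8 * D * Q u * (Q u * P w - Q w * P u) := by
    have := add_pos (mul_pos (by linarith : 0 < D + b) hplus)
      (mul_pos (by linarith : 0 < D - b) hminus)
    linear_combination this + 2 * D * P u * hD
  nlinarith [mul_pos (by linarith : 0 < D) (neg_pos.mpr hu),
    mul_nonneg_of_nonpos_of_nonpos hu.le hPw, mul_nonneg hw.le (neg_nonneg.mpr hPu)]

theorem div_lt_div_of_neg_of_pos (hPQ : ∀ x ≠ 0, Q x = 0 → 0 < P x) {u w : E}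
    (hu : Q u < 0) (hw : 0 < Q w) : P u / Q u < P w / Q w := by
  set r := P u / Q u
  have hPQ' : ∀ x ≠ 0, Q x = 0 → 0 < (P - r • Q) x := fun x hx h0 ↦ by
    simpa [h0] using hPQ x hx h0
  rcases pos_or_pos_of_neg_of_pos hPQ' hu hw with h | h
  · simp [r, div_mul_cancel₀ _ hu.ne] at h
  · rw [lt_div_iff₀ hw]
    simpa [sub_pos] using h

-- The paper's `r₋` and `r₊` are `sSup (negConeRatios P Q)` and `sInf (posConeRatios P Q)`.
def negConeRatios (P Q : QuadraticForm ℝ E) : Set ℝ := {r | ∃ u, Q u < 0 ∧ r = P u / Q u}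

def posConeRatios (P Q : QuadraticForm ℝ E) : Set ℝ := {r | ∃ v, 0 < Q v ∧ r = P v / Q v}

end Algebraic

section FiniteDimensional

variable {E : Type*} [NormedAddCommGroup E] [NormedSpace ℝ E] [FiniteDimensional ℝ E]
  {P Q : QuadraticForm ℝ E}

theorem continuous_of_finiteDimensional (Q : QuadraticForm ℝ E) : Continuous Q := by
  have := isModuleTopologyOfFiniteDimensional (𝕜 := ℝ) (E := E)
  have h := IsModuleTopology.continuous_bilinear_of_finite_left (associated Q)
  exact (h.comp (continuous_id.prodMk continuous_id)).congr fun x ↦ associated_eq_self_apply ℝ Q x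

theorem exists_forall_div_le_of_neg (hPQ : ∀ x ≠ 0, Q x = 0 → 0 < P x) (hQ : ∃ u, Q u < 0) :
    ∃ v, Q v < 0 ∧ ∀ u, Q u < 0 → P u / Q u ≤ P v / Q v := by
  set S := Metric.sphere (0 : E) 1
  have hsphere : ∀ u, Q u < 0 → ∃ x ∈ S, Q x < 0 ∧ P x / Q x = P u / Q u := by
    intro u hu
    have hu0 : u ≠ 0 := by rintro rfl; simp at hu
    have hc : ‖u‖⁻¹ ≠ 0 := inv_ne_zero (norm_ne_zero_iff.mpr hu0)
    refine ⟨‖u‖⁻¹ • u, mem_sphere_zero_iff_norm.mpr (norm_smul_inv_norm (𝕜 := ℝ) hu0), ?_,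
      div_map_smul P Q hc u⟩
    rw [Q.map_smul, smul_eq_mul]
    exact mul_neg_of_pos_of_neg (mul_self_pos.mpr hc) hu
  obtain ⟨u₀, hu₀⟩ := hQ
  obtain ⟨x₀, hx₀S, hx₀, -⟩ := hsphere u₀ hu₀
  set a := P x₀ / Q x₀
  set T := S ∩ {x | Q x ≤ 0 ∧ P x ≤ a * Q x}
  have hTneg : ∀ x ∈ T, Q x < 0 := by
    rintro x ⟨hxS, hxQ, hxP⟩
    refine hxQ.lt_of_ne fun h0 ↦ ?_
    have hx0 : x ≠ 0 := ne_zero_of_mem_unit_sphere ⟨x, hxS⟩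
    linarith [hPQ x hx0 h0, show a * Q x = 0 by rw [h0, mul_zero]]
  have hPc := P.continuous_of_finiteDimensional
  have hQc := Q.continuous_of_finiteDimensional
  have hTc : IsCompact T := (isCompact_sphere 0 1).inter_right
    ((isClosed_le hQc continuous_const).inter (isClosed_le hPc (continuous_const.mul hQc)))
  have hx₀T : x₀ ∈ T := ⟨hx₀S, hx₀.le, (div_mul_cancel₀ _ hx₀.ne).ge⟩
  obtain ⟨v, hvT, hvmax⟩ := hTc.exists_isMaxOn ⟨x₀, hx₀T⟩ <|
    hPc.continuousOn.div hQc.continuousOn fun x hx ↦ (hTneg x hx).ne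
  refine ⟨v, hTneg v hvT, fun u hu ↦ ?_⟩
  obtain ⟨x, hxS, hx, hxu⟩ := hsphere u hu
  rw [← hxu]
  by_cases hxa : P x ≤ a * Q x
  · exact hvmax ⟨hxS, hx.le, hxa⟩
  · exact ((div_lt_iff_of_neg hx).mpr (not_le.mp hxa)).le.trans (hvmax hx₀T)

theorem exists_forall_le_div_of_pos (hPQ : ∀ x ≠ 0, Q x = 0 → 0 < P x) (hQ : ∃ w, 0 < Q w) :
    ∃ w, 0 < Q w ∧ ∀ u, 0 < Q u → P w / Q w ≤ P u / Q u := by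
  have hPQ' : ∀ x ≠ 0, (-Q) x = 0 → 0 < P x := fun x hx h0 ↦ hPQ x hx (neg_eq_zero.mp h0)
  obtain ⟨w, hw, hmax⟩ := exists_forall_div_le_of_neg hPQ' (by simpa using hQ)
  refine ⟨w, by simpa using hw, fun u hu ↦ ?_⟩
  simpa [div_neg] using hmax u (by simpa using hu)

theorem exists_isGreatest_negConeRatios (hPQ : ∀ x ≠ 0, Q x = 0 → 0 < P x)
    (hQ : ∃ u, Q u < 0) : ∃ M, IsGreatest (negConeRatios P Q) M := by
  obtain ⟨v, hv, hmax⟩ := exists_forall_div_le_of_neg hPQ hQ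
  exact ⟨_, ⟨v, hv, rfl⟩, by rintro _ ⟨u, hu, rfl⟩; exact hmax u hu⟩

theorem exists_isLeast_posConeRatios (hPQ : ∀ x ≠ 0, Q x = 0 → 0 < P x)
    (hQ : ∃ w, 0 < Q w) : ∃ m, IsLeast (posConeRatios P Q) m := by
  obtain ⟨w, hw, hmin⟩ := exists_forall_le_div_of_pos hPQ hQ
  exact ⟨_, ⟨w, hw, rfl⟩, by rintro _ ⟨u, hu, rfl⟩; exact hmin u hu⟩

theorem sSup_negConeRatios_lt_sInf_posConeRatios (hPQ : ∀ x ≠ 0, Q x = 0 → 0 < P x)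
    (hneg : ∃ u, Q u < 0) (hpos : ∃ w, 0 < Q w) :
    sSup (negConeRatios P Q) < sInf (posConeRatios P Q) := by
  obtain ⟨M, hM⟩ := exists_isGreatest_negConeRatios hPQ hneg
  obtain ⟨m, hm⟩ := exists_isLeast_posConeRatios hPQ hpos
  rw [hM.csSup_eq, hm.csInf_eq]
  obtain ⟨v, hv, rfl⟩ := hM.1
  obtain ⟨w, hw, rfl⟩ := hm.1
  exact div_lt_div_of_neg_of_pos hPQ hv hw

theorem mul_lt_of_sSup_negConeRatios_lt_of_lt_sInf_posConeRatios
    (hPQ : ∀ x ≠ 0, Q x = 0 → 0 < P x) {r : ℝ} (hlow : sSup (negConeRatios P Q) < r)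
    (hupp : r < sInf (posConeRatios P Q)) {v : E} (hv : v ≠ 0) : r * Q v < P v := by
  rcases lt_trichotomy (Q v) 0 with hQv | hQv | hQv
  · obtain ⟨M, hM⟩ := exists_isGreatest_negConeRatios hPQ ⟨v, hQv⟩
    have := (le_csSup hM.bddAbove ⟨v, hQv, rfl⟩).trans_lt hlow
    rwa [div_lt_iff_of_neg hQv] at this
  · simpa [hQv] using hPQ v hv hQv
  · obtain ⟨m, hm⟩ := exists_isLeast_posConeRatios hPQ ⟨v, hQv⟩
    have := hupp.trans_le (csInf_le hm.bddBelow ⟨v, hQv, rfl⟩)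
    rwa [lt_div_iff₀ hQv] at this

end FiniteDimensional

end QuadraticMap

theorem stmt_1_general {n : ℕ}
    (J : EuclideanSpace ℝ (Fin n) →ₗ[ℝ] EuclideanSpace ℝ (Fin n))
    (hindefpos : ∃ v : EuclideanSpace ℝ (Fin n), 0 < ⟪J v, v⟫)
    (hindefneg : ∃ w : EuclideanSpace ℝ (Fin n), ⟪J w, w⟫ < 0)
    (F : EuclideanSpace ℝ (Fin n) →ₗ[ℝ] EuclideanSpace ℝ (Fin n) →ₗ[ℝ] ℝ)
    (hF0 : ∀ v : EuclideanSpace ℝ (Fin n), v ≠ 0 → ⟪J v, v⟫ = 0 → 0 < F v v) :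
    sSup {r : ℝ | ∃ u : EuclideanSpace ℝ (Fin n), ⟪J u, u⟫ < 0 ∧ r = F u u / ⟪J u, u⟫}
      < sInf {r : ℝ | ∃ v : EuclideanSpace ℝ (Fin n), 0 < ⟪J v, v⟫ ∧ r = F v v / ⟪J v, v⟫} ∧
    ∀ r : ℝ,
      sSup {r : ℝ | ∃ u : EuclideanSpace ℝ (Fin n), ⟪J u, u⟫ < 0 ∧ r = F u u / ⟪J u, u⟫} < r →
      r < sInf {r : ℝ | ∃ v : EuclideanSpace ℝ (Fin n), 0 < ⟪J v, v⟫ ∧ r = F v v / ⟪J v, v⟫} →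
      ∀ v : EuclideanSpace ℝ (Fin n), v ≠ 0 → r * ⟪J v, v⟫ < F v v := by
  let Q : QuadraticForm ℝ (EuclideanSpace ℝ (Fin n)) :=
    LinearMap.BilinMap.toQuadraticMap ((innerₗ _).comp J)
  have hPQ : ∀ v ≠ 0, Q v = 0 → 0 < LinearMap.BilinMap.toQuadraticMap F v := hF0
  exact ⟨QuadraticMap.sSup_negConeRatios_lt_sInf_posConeRatios hPQ hindefneg hindefpos,
    fun r hlow hupp v hv ↦
      QuadraticMap.mul_lt_of_sSup_negConeRatios_lt_of_lt_sInf_posConeRatios hPQ hlow hupp hv⟩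

/-- **Lemma (Kühne-type, strict version).** Let `V = ℝⁿ` (`n ≥ 2`) carry a non-degenerate
indefinite quadratic form `𝕁 v := ⟪J v, v⟫` given by an invertible self-adjoint operator `J`.
If a symmetric bilinear form `F` is positive on `C₀ \ {0}`, then
`r₋ := sup { F(u,u)/𝕁(u) : 𝕁(u) < 0 } < inf { F(v,v)/𝕁(v) : 𝕁(v) > 0 } =: r₊`
and for every `r ∈ (r₋, r₊)` one has `F(v,v) > r·𝕁(v)` for every nonzero vector `v`. -/
theorem stmt_1 {n : ℕ} (hn : 2 ≤ n)
    (J : EuclideanSpace ℝ (Fin n) →ₗ[ℝ] EuclideanSpace ℝ (Fin n))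
    (hJinv : Function.Bijective J)
    (hJsa : ∀ v w : EuclideanSpace ℝ (Fin n), ⟪J v, w⟫ = ⟪v, J w⟫)
    (hindefpos : ∃ v : EuclideanSpace ℝ (Fin n), 0 < ⟪J v, v⟫)
    (hindefneg : ∃ w : EuclideanSpace ℝ (Fin n), ⟪J w, w⟫ < 0)
    (F : EuclideanSpace ℝ (Fin n) →ₗ[ℝ] EuclideanSpace ℝ (Fin n) →ₗ[ℝ] ℝ)
    (hFsymm : ∀ v w, F v w = F w v)
    (hF0 : ∀ v : EuclideanSpace ℝ (Fin n), v ≠ 0 → ⟪J v, v⟫ = 0 → 0 < F v v) :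
    sSup {r : ℝ | ∃ u : EuclideanSpace ℝ (Fin n), ⟪J u, u⟫ < 0 ∧ r = F u u / ⟪J u, u⟫}
      < sInf {r : ℝ | ∃ v : EuclideanSpace ℝ (Fin n), 0 < ⟪J v, v⟫ ∧ r = F v v / ⟪J v, v⟫} ∧
    ∀ r : ℝ,
      sSup {r : ℝ | ∃ u : EuclideanSpace ℝ (Fin n), ⟪J u, u⟫ < 0 ∧ r = F u u / ⟪J u, u⟫} < r →
      r < sInf {r : ℝ | ∃ v : EuclideanSpace ℝ (Fin n), 0 < ⟪J v, v⟫ ∧ r = F v v / ⟪J v, v⟫} →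
      ∀ v : EuclideanSpace ℝ (Fin n), v ≠ 0 → r * ⟪J v, v⟫ < F v v :=
  stmt_1_general J hindefpos hindefneg F hF0
end

section
/- Let L : V → V be an invertible J-separated linear operator, and set ρ₊(L) := inf{ 𝕁(Lv)/𝕁(v) : 𝕁(v) > 0 } and ρ₋(L) := sup{ 𝕁(Lv)/𝕁(v) : 𝕁(v) < 0 }. Then L is J-monotone if and only if ρ₋(L) ≤ 1 and ρ₊(L) ≥ 1. If moreover L is strictly J-separated, then L is strictly J-monotone if and only if ρ₋(L) < 1 and ρ₊(L) > 1. -/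
/-!
If `L` is `J`-separated, then `𝕁(Lw)/𝕁(w) ≤ 𝕁(Lu)/𝕁(u)` whenever `𝕁(w) < 0 < 𝕁(u)`. Indeed
`t ↦ 𝕁(u + t w)` has roots `r₁ < 0 < r₂`; the corresponding null vectors are limits of positive
vectors, so `𝕁(L(u + rᵢ w)) ≥ 0`, and comparing the quadratics `𝕁(u + t w)` and `𝕁(L(u + t w))`
at both roots yields the inequality. Hence both quotient sets are bounded, `ρ₊` and `ρ₋` are
genuine infimum and supremum, and the conditions on them say exactly that `𝕁(Lv) ≥ 𝕁(v)` on
positive and on negative vectors; on null vectors this holds by separation (strictly, for nonzero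
vectors, by strict separation and injectivity). Conversely, if `L` is strictly `J`-monotone,
compactness of the unit sphere gives `κ > 0` with `𝕁(Lv) - 𝕁(v) ≥ κ |𝕁(v)|`, so
`ρ₊ ≥ 1 + κ` and `ρ₋ ≤ 1 - κ`.
-/

open scoped RealInnerProductSpace

noncomputable section

/-- The positive cone `C₊ = {0} ∪ {v | ⟪J v, v⟫ > 0}`. -/
def posCone {n : ℕ} (J : EuclideanSpace ℝ (Fin n) →ₗ[ℝ] EuclideanSpace ℝ (Fin n)) :
    Set (EuclideanSpace ℝ (Fin n)) :=
  {0} ∪ {v | 0 < ⟪J v, v⟫}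

/-- The zero set `C₀ = {v | ⟪J v, v⟫ = 0}`. -/
def zeroCone {n : ℕ} (J : EuclideanSpace ℝ (Fin n) →ₗ[ℝ] EuclideanSpace ℝ (Fin n)) :
    Set (EuclideanSpace ℝ (Fin n)) :=
  {v | ⟪J v, v⟫ = 0}

/-- `L` is `J`-separated: `L(C₊) ⊆ C₊`. -/
def JSeparated {n : ℕ} (J L : EuclideanSpace ℝ (Fin n) →ₗ[ℝ] EuclideanSpace ℝ (Fin n)) : Prop :=
  ∀ v ∈ posCone J, L v ∈ posCone J

/-- `L` is strictly `J`-separated: `L(C₊ ∪ C₀) ⊆ C₊`. -/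
def StrictJSeparated {n : ℕ}
    (J L : EuclideanSpace ℝ (Fin n) →ₗ[ℝ] EuclideanSpace ℝ (Fin n)) : Prop :=
  ∀ v ∈ posCone J ∪ zeroCone J, L v ∈ posCone J

/-- `ρ₊(L) = inf { 𝕁(Lv)/𝕁(v) : 𝕁(v) > 0 }`. -/
def rhoPlus {n : ℕ} (J L : EuclideanSpace ℝ (Fin n) →ₗ[ℝ] EuclideanSpace ℝ (Fin n)) : ℝ :=
  sInf {r : ℝ | ∃ v : EuclideanSpace ℝ (Fin n), 0 < ⟪J v, v⟫ ∧ r = ⟪J (L v), L v⟫ / ⟪J v, v⟫}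

/-- `ρ₋(L) = sup { 𝕁(Lv)/𝕁(v) : 𝕁(v) < 0 }`. -/
def rhoMinus {n : ℕ} (J L : EuclideanSpace ℝ (Fin n) →ₗ[ℝ] EuclideanSpace ℝ (Fin n)) : ℝ :=
  sSup {r : ℝ | ∃ v : EuclideanSpace ℝ (Fin n), ⟪J v, v⟫ < 0 ∧ r = ⟪J (L v), L v⟫ / ⟪J v, v⟫}

open Filter Topology

lemma nonneg_of_forall_pos_quadratic_nonneg {a b c : ℝ}
    (h : ∀ t > 0, 0 ≤ a + 2 * b * t + c * t ^ 2) : 0 ≤ a := by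
  have hcont : Continuous fun t : ℝ => a + 2 * b * t + c * t ^ 2 := by fun_prop
  have hlim : Tendsto (fun t : ℝ => a + 2 * b * t + c * t ^ 2) (𝓝[>] 0) (𝓝 a) := by
    simpa using hcont.continuousWithinAt (s := Set.Ioi 0) (x := 0) |>.tendsto
  exact ge_of_tendsto hlim (eventually_nhdsWithin_of_forall h)

lemma exists_neg_root_and_pos_root {a b c : ℝ} (ha : 0 < a) (hc : c < 0) :
    ∃ r₁ < 0, ∃ r₂ > 0, a + 2 * b * r₁ + c * r₁ ^ 2 = 0 ∧ a + 2 * b * r₂ + c * r₂ ^ 2 = 0 := by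
  set s := √(b ^ 2 - a * c)
  have hs : s ^ 2 = b ^ 2 - a * c := Real.sq_sqrt (by nlinarith [sq_nonneg b])
  have hbs : |b| < s := (Real.lt_sqrt (abs_nonneg b)).mpr (by rw [sq_abs]; nlinarith)
  have hroot : ∀ r, c * r = -b + s ∨ c * r = -b - s → a + 2 * b * r + c * r ^ 2 = 0 := by
    intro r hr
    have : c * (a + 2 * b * r + c * r ^ 2) = 0 := by
      rcases hr with hr | hr
      · linear_combination (c * r + s + b) * hr + hs
      · linear_combination (c * r - s + b) * hr + hs
    exact (mul_eq_zero.mp this).resolve_left hc.ne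
  refine ⟨(-b + s) / c, div_neg_of_pos_of_neg (by linarith [le_abs_self b]) hc,
    (-b - s) / c, div_pos_of_neg_of_neg (by linarith [neg_abs_le b]) hc,
    hroot _ (.inl (mul_div_cancel₀ _ hc.ne)), hroot _ (.inr (mul_div_cancel₀ _ hc.ne))⟩

lemma coeff_mul_le_of_nonneg_at_roots {a b c a' b' c' r₁ r₂ : ℝ} (ha : 0 < a)
    (hr₁ : r₁ < 0) (hr₂ : 0 < r₂)
    (hq₁ : a + 2 * b * r₁ + c * r₁ ^ 2 = 0) (hq₂ : a + 2 * b * r₂ + c * r₂ ^ 2 = 0)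
    (hp₁ : 0 ≤ a' + 2 * b' * r₁ + c' * r₁ ^ 2) (hp₂ : 0 ≤ a' + 2 * b' * r₂ + c' * r₂ ^ 2) :
    c * a' ≤ a * c' := by
  -- For the two quadratics `q, p`, `a p - a' q = t (2B + A t)` with `A = a c' - a' c`;
  -- its signs at `r₁ < 0 < r₂` force `A ≥ 0`.
  have hid : ∀ r, r * (2 * (a * b' - a' * b) + (a * c' - a' * c) * r) =
      a * (a' + 2 * b' * r + c' * r ^ 2) - a' * (a + 2 * b * r + c * r ^ 2) := fun r => by ring
  have h₁ : 2 * (a * b' - a' * b) + (a * c' - a' * c) * r₁ ≤ 0 :=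
    nonpos_of_mul_nonneg_right (by rw [hid, hq₁]; nlinarith) hr₁
  have h₂ : 0 ≤ 2 * (a * b' - a' * b) + (a * c' - a' * c) * r₂ :=
    (mul_nonneg_iff_of_pos_left hr₂).mp (by rw [hid, hq₂]; nlinarith)
  nlinarith

section IndefiniteForm

variable {E : Type*} [NormedAddCommGroup E] [InnerProductSpace ℝ E] {J L : E →ₗ[ℝ] E}

lemma LinearMap.IsSymmetric.inner_map_add_smul (hJ : J.IsSymmetric) (u w : E) (t : ℝ) :
    ⟪J (u + t • w), u + t • w⟫ = ⟪J u, u⟫ + 2 * ⟪J u, w⟫ * t + ⟪J w, w⟫ * t ^ 2 := by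
  have hwu : ⟪J w, u⟫ = ⟪J u, w⟫ := by rw [hJ, real_inner_comm]
  simp only [map_add, map_smul, inner_add_left, inner_add_right, real_inner_smul_left,
    real_inner_smul_right, hwu]
  ring

lemma inner_map_smul_self (c : ℝ) (v : E) : ⟪J (c • v), c • v⟫ = c ^ 2 * ⟪J v, v⟫ := by
  simp only [map_smul, real_inner_smul_left, real_inner_smul_right]
  ring

lemma inner_map_map_nonneg_of_nonneg (hJ : J.IsSymmetric) (hpos : ∃ v, 0 < ⟪J v, v⟫)
    (hL : ∀ v, 0 < ⟪J v, v⟫ → 0 ≤ ⟪J (L v), L v⟫) {v : E} (hv : 0 ≤ ⟪J v, v⟫) :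
    0 ≤ ⟪J (L v), L v⟫ := by
  obtain ⟨s, hs, hvs⟩ : ∃ s, 0 < ⟪J s, s⟫ ∧ 0 ≤ ⟪J v, s⟫ := by
    obtain ⟨v₀, hv₀⟩ := hpos
    rcases le_total 0 ⟪J v, v₀⟫ with h | h
    · exact ⟨v₀, hv₀, h⟩
    · exact ⟨-v₀, by simpa using hv₀, by simpa using h⟩
  refine nonneg_of_forall_pos_quadratic_nonneg (b := ⟪J (L v), L s⟫) (c := ⟪J (L s), L s⟫)
    fun t ht => ?_
  rw [← hJ.inner_map_add_smul, ← map_smul, ← map_add]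
  refine hL _ ?_
  rw [hJ.inner_map_add_smul]
  nlinarith [mul_pos hs (pow_pos ht 2), mul_nonneg hvs ht.le]

lemma div_inner_map_le_of_neg_of_pos (hJ : J.IsSymmetric) (hpos : ∃ v, 0 < ⟪J v, v⟫)
    (hL : ∀ v, 0 < ⟪J v, v⟫ → 0 ≤ ⟪J (L v), L v⟫) {u w : E}
    (hw : ⟪J w, w⟫ < 0) (hu : 0 < ⟪J u, u⟫) :
    ⟪J (L w), L w⟫ / ⟪J w, w⟫ ≤ ⟪J (L u), L u⟫ / ⟪J u, u⟫ := by
  obtain ⟨r₁, hr₁, r₂, hr₂, hq₁, hq₂⟩ := exists_neg_root_and_pos_root (b := ⟪J u, w⟫) hu hw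
  have hp : ∀ r, ⟪J u, u⟫ + 2 * ⟪J u, w⟫ * r + ⟪J w, w⟫ * r ^ 2 = 0 →
      0 ≤ ⟪J (L u), L u⟫ + 2 * ⟪J (L u), L w⟫ * r + ⟪J (L w), L w⟫ * r ^ 2 := by
    intro r hr
    rw [← hJ.inner_map_add_smul, ← map_smul, ← map_add]
    exact inner_map_map_nonneg_of_nonneg hJ hpos hL (by rw [hJ.inner_map_add_smul, hr])
  have := coeff_mul_le_of_nonneg_at_roots hu hr₁ hr₂ hq₁ hq₂ (hp _ hq₁) (hp _ hq₂)
  rw [div_le_iff_of_neg hw, div_mul_eq_mul_div, div_le_iff₀ hu]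
  linarith

variable [FiniteDimensional ℝ E]

lemma exists_pos_mul_norm_sq_le {f : E → ℝ} (hf : Continuous f)
    (hsmul : ∀ (c : ℝ) v, f (c • v) = c ^ 2 * f v) (hpos : ∀ v ≠ 0, 0 < f v) :
    ∃ δ > 0, ∀ v, δ * ‖v‖ ^ 2 ≤ f v := by
  obtain ⟨δ, hδ, hδle⟩ := (isCompact_sphere (0 : E) 1).exists_forall_le' hf.continuousOn
    fun v hv => hpos v (ne_zero_of_mem_unit_sphere ⟨v, hv⟩)
  refine ⟨δ, hδ, fun v => ?_⟩
  rcases eq_or_ne v 0 with rfl | hv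
  · simp [show f 0 = 0 by simpa using hsmul 0 0]
  · have hu : ‖v‖⁻¹ • v ∈ Metric.sphere (0 : E) 1 := by
      rw [mem_sphere_zero_iff_norm, norm_smul, norm_inv, norm_norm,
        inv_mul_cancel₀ (norm_ne_zero_iff.mpr hv)]
    calc δ * ‖v‖ ^ 2 ≤ ‖v‖ ^ 2 * f (‖v‖⁻¹ • v) := by
          rw [mul_comm]; gcongr; exact hδle _ hu
      _ = f v := by rw [← hsmul, smul_inv_smul₀ (norm_ne_zero_iff.mpr hv)]

lemma abs_inner_map_self_le (v : E) :
    |⟪J v, v⟫| ≤ ‖LinearMap.toContinuousLinearMap J‖ * ‖v‖ ^ 2 :=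
  calc |⟪J v, v⟫| ≤ ‖J v‖ * ‖v‖ := abs_real_inner_le_norm _ _
    _ ≤ ‖LinearMap.toContinuousLinearMap J‖ * ‖v‖ * ‖v‖ := by
        gcongr; exact (LinearMap.toContinuousLinearMap J).le_opNorm v
    _ = _ := by ring

lemma exists_pos_mul_abs_le_sub_of_forall_lt (h : ∀ v ≠ 0, ⟪J v, v⟫ < ⟪J (L v), L v⟫) :
    ∃ κ > 0, ∀ v, κ * |⟪J v, v⟫| ≤ ⟪J (L v), L v⟫ - ⟪J v, v⟫ := by
  have hJc := J.continuous_of_finiteDimensional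
  have hLc := L.continuous_of_finiteDimensional
  obtain ⟨δ, hδ, hδle⟩ := exists_pos_mul_norm_sq_le
    (f := fun v => ⟪J (L v), L v⟫ - ⟪J v, v⟫) (by fun_prop)
    (fun c v => by rw [L.map_smul, inner_map_smul_self, inner_map_smul_self]; ring)
    (fun v hv => sub_pos.mpr (h v hv))
  set M := ‖LinearMap.toContinuousLinearMap J‖
  refine ⟨δ / (M + 1), by positivity, fun v => ?_⟩
  calc δ / (M + 1) * |⟪J v, v⟫| ≤ δ / (M + 1) * (M * ‖v‖ ^ 2) := by
        gcongr; exact abs_inner_map_self_le v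
    _ ≤ δ * ‖v‖ ^ 2 := by
        rw [div_mul_eq_mul_div, div_le_iff₀ (by positivity)]
        nlinarith [mul_nonneg hδ.le (sq_nonneg ‖v‖)]
    _ ≤ _ := hδle v

end IndefiniteForm

section Ratios

variable {n : ℕ} {J L : EuclideanSpace ℝ (Fin n) →ₗ[ℝ] EuclideanSpace ℝ (Fin n)}

lemma JSeparated.inner_map_nonneg (hL : JSeparated J L) {v : EuclideanSpace ℝ (Fin n)}
    (hv : 0 < ⟪J v, v⟫) : 0 ≤ ⟪J (L v), L v⟫ := by
  rcases hL v (.inr hv) with h | h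
  · simp [Set.mem_singleton_iff.mp h]
  · exact h.le

lemma StrictJSeparated.inner_map_pos (hL : StrictJSeparated J L) (hinj : Function.Injective L)
    {v : EuclideanSpace ℝ (Fin n)} (hv₀ : v ≠ 0) (hv : ⟪J v, v⟫ = 0) : 0 < ⟪J (L v), L v⟫ := by
  rcases hL v (.inr hv) with h | h
  · exact absurd (hinj ((Set.mem_singleton_iff.mp h).trans (map_zero L).symm)) hv₀
  · exact h

lemma le_rhoPlus_iff (hJ : J.IsSymmetric) (hL : JSeparated J L)
    (hpos : ∃ v, 0 < ⟪J v, v⟫) (hneg : ∃ w, ⟪J w, w⟫ < 0) {c : ℝ} :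
    c ≤ rhoPlus J L ↔ ∀ v, 0 < ⟪J v, v⟫ → c * ⟪J v, v⟫ ≤ ⟪J (L v), L v⟫ := by
  obtain ⟨v₀, hv₀⟩ := hpos
  obtain ⟨w, hw⟩ := hneg
  rw [rhoPlus]
  refine (le_csInf_iff ?_ ?_).trans ⟨?_, ?_⟩
  · refine ⟨⟪J (L w), L w⟫ / ⟪J w, w⟫, ?_⟩
    rintro _ ⟨v, hv, rfl⟩
    exact div_inner_map_le_of_neg_of_pos hJ ⟨v₀, hv₀⟩ (fun _ => hL.inner_map_nonneg) hw hv
  · exact ⟨_, v₀, hv₀, rfl⟩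
  · exact fun h v hv => (le_div_iff₀ hv).mp (h _ ⟨v, hv, rfl⟩)
  · rintro h _ ⟨v, hv, rfl⟩
    exact (le_div_iff₀ hv).mpr (h v hv)

lemma rhoMinus_le_iff (hJ : J.IsSymmetric) (hL : JSeparated J L)
    (hpos : ∃ v, 0 < ⟪J v, v⟫) (hneg : ∃ w, ⟪J w, w⟫ < 0) {c : ℝ} :
    rhoMinus J L ≤ c ↔ ∀ v, ⟪J v, v⟫ < 0 → c * ⟪J v, v⟫ ≤ ⟪J (L v), L v⟫ := by
  obtain ⟨u, hu⟩ := hpos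
  obtain ⟨w₀, hw₀⟩ := hneg
  rw [rhoMinus]
  refine (csSup_le_iff ?_ ?_).trans ⟨?_, ?_⟩
  · refine ⟨⟪J (L u), L u⟫ / ⟪J u, u⟫, ?_⟩
    rintro _ ⟨w, hw, rfl⟩
    exact div_inner_map_le_of_neg_of_pos hJ ⟨u, hu⟩ (fun _ => hL.inner_map_nonneg) hw hu
  · exact ⟨_, w₀, hw₀, rfl⟩
  · exact fun h v hv => (div_le_iff_of_neg hv).mp (h _ ⟨v, hv, rfl⟩)
  · rintro h _ ⟨v, hv, rfl⟩
    exact (div_le_iff_of_neg hv).mpr (h v hv)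

end Ratios

theorem stmt_4_general {n : ℕ}
    (J : EuclideanSpace ℝ (Fin n) →ₗ[ℝ] EuclideanSpace ℝ (Fin n))
    (hJsa : ∀ v w : EuclideanSpace ℝ (Fin n), ⟪J v, w⟫ = ⟪v, J w⟫)
    (hindefpos : ∃ v : EuclideanSpace ℝ (Fin n), 0 < ⟪J v, v⟫)
    (hindefneg : ∃ w : EuclideanSpace ℝ (Fin n), ⟪J w, w⟫ < 0)
    (L : EuclideanSpace ℝ (Fin n) →ₗ[ℝ] EuclideanSpace ℝ (Fin n))
    (hLinv : Function.Bijective L)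
    (hLsep : JSeparated J L) :
    ((∀ v : EuclideanSpace ℝ (Fin n), ⟪J v, v⟫ ≤ ⟪J (L v), L v⟫) ↔
      (rhoMinus J L ≤ 1 ∧ 1 ≤ rhoPlus J L)) ∧
    (StrictJSeparated J L →
      ((∀ v : EuclideanSpace ℝ (Fin n), v ≠ 0 → ⟪J v, v⟫ < ⟪J (L v), L v⟫) ↔
        (rhoMinus J L < 1 ∧ 1 < rhoPlus J L))) := by
  have hplus (c : ℝ) := le_rhoPlus_iff (c := c) hJsa hLsep hindefpos hindefneg
  have hminus (c : ℝ) := rhoMinus_le_iff (c := c) hJsa hLsep hindefpos hindefneg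
  have hnull (v) (hv : ⟪J v, v⟫ = 0) : 0 ≤ ⟪J (L v), L v⟫ :=
    inner_map_map_nonneg_of_nonneg hJsa hindefpos (fun _ => hLsep.inner_map_nonneg) hv.ge
  refine ⟨?_, fun hstrict => ⟨fun hmono => ?_, fun ⟨hm, hp⟩ v hv => ?_⟩⟩
  · rw [hminus, hplus]
    refine ⟨fun hmono => ⟨fun v _ => by simpa using hmono v, fun v _ => by simpa using hmono v⟩,
      fun ⟨hm, hp⟩ v => ?_⟩
    rcases lt_trichotomy ⟪J v, v⟫ 0 with h | h | h
    · simpa using hm v h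
    · exact h ▸ hnull v h
    · simpa using hp v h
  · obtain ⟨κ, hκ, hκle⟩ := exists_pos_mul_abs_le_sub_of_forall_lt hmono
    have h₁ : rhoMinus J L ≤ 1 - κ := (hminus _).mpr fun v hv => by
      have := hκle v; rw [abs_of_neg hv] at this; linarith
    have h₂ : 1 + κ ≤ rhoPlus J L := (hplus _).mpr fun v hv => by
      have := hκle v; rw [abs_of_pos hv] at this; linarith
    constructor <;> linarith
  · rcases lt_trichotomy ⟪J v, v⟫ 0 with h | h | h
    · nlinarith [(hminus _).mp le_rfl v h]
    · exact h ▸ hstrict.inner_map_pos hLinv.injective hv h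
    · nlinarith [(hplus _).mp le_rfl v h]

/-- **Proposition 2.4(3).** An invertible `J`-separated operator `L` is `J`-monotone iff
`ρ₋(L) ≤ 1` and `ρ₊(L) ≥ 1`; if moreover `L` is strictly `J`-separated, then `L` is strictly
`J`-monotone iff `ρ₋(L) < 1` and `ρ₊(L) > 1`. -/
theorem stmt_4 {n : ℕ} (hn : 2 ≤ n)
    (J : EuclideanSpace ℝ (Fin n) →ₗ[ℝ] EuclideanSpace ℝ (Fin n))
    (hJinv : Function.Bijective J)
    (hJsa : ∀ v w : EuclideanSpace ℝ (Fin n), ⟪J v, w⟫ = ⟪v, J w⟫)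
    (hindefpos : ∃ v : EuclideanSpace ℝ (Fin n), 0 < ⟪J v, v⟫)
    (hindefneg : ∃ w : EuclideanSpace ℝ (Fin n), ⟪J w, w⟫ < 0)
    (L : EuclideanSpace ℝ (Fin n) →ₗ[ℝ] EuclideanSpace ℝ (Fin n))
    (hLinv : Function.Bijective L)
    (hLsep : JSeparated J L) :
    ((∀ v : EuclideanSpace ℝ (Fin n), ⟪J v, v⟫ ≤ ⟪J (L v), L v⟫) ↔
      (rhoMinus J L ≤ 1 ∧ 1 ≤ rhoPlus J L)) ∧
    (StrictJSeparated J L →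
      ((∀ v : EuclideanSpace ℝ (Fin n), v ≠ 0 → ⟪J v, v⟫ < ⟪J (L v), L v⟫) ↔
        (rhoMinus J L < 1 ∧ 1 < rhoPlus J L))) :=
  stmt_4_general J hJsa hindefpos hindefneg L hLinv hLsep
end
end
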